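/- arXiv:2207.12557 — 4 statements merged into one kernel-verified Lean document; each statement's English description precedes it below -/
import Mathlib

section
/- Let (A_i), (B_i), (E_i), (D_i) be sequences of nonnegative real numbers such that for all n ≥ 0, A_n^2 + Σ_{i=0}^n B_i^2 ≤ A_0^2 + Σ_{i=1}^n E_i·A_i + Σ_{i=0}^n D_i. Then for every n ≥ 0, A_n ≤ A_0 + Σ_{i=1}^n E_i + (Σ_{i=0}^n D_i)^{1/2}. -/
lemma key_quad (x a b c : ℝ) (hx : 0 ≤ x) (ha : 0 ≤ a) (hb : 0 ≤ b) (hc : 0 ≤ c)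
    (h : x ^ 2 ≤ a ^ 2 + b * x + c) : x ≤ a + b + Real.sqrt c := by
  have hs : Real.sqrt c ^ 2 = c := Real.sq_sqrt hc
  have hs0 : 0 ≤ Real.sqrt c := Real.sqrt_nonneg c
  by_contra hlt
  push_neg at hlt
  nlinarith [mul_nonneg ha hs0, mul_nonneg hx hs0]

open Finset in
theorem gronwall_free_discrete_A (A B E D : ℕ → ℝ)
    (hA : ∀ i, 0 ≤ A i) (hB : ∀ i, 0 ≤ B i) (hE : ∀ i, 0 ≤ E i) (hD : ∀ i, 0 ≤ D i)
    (h : ∀ n, A n ^ 2 + ∑ i ∈ range (n + 1), B i ^ 2 ≤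
      A 0 ^ 2 + ∑ i ∈ Icc 1 n, E i * A i + ∑ i ∈ range (n + 1), D i) :
    ∀ n, A n ≤ A 0 + ∑ i ∈ Icc 1 n, E i + Real.sqrt (∑ i ∈ range (n + 1), D i) := by
  intro n
  obtain ⟨m, hm, hmax⟩ := Finset.exists_max_image (range (n + 1)) A ⟨n, self_mem_range_succ n⟩
  have hmn : m ≤ n := by simpa [Nat.lt_succ_iff] using Finset.mem_range.mp hm
  have hBsum : 0 ≤ ∑ i ∈ range (m + 1), B i ^ 2 :=
    Finset.sum_nonneg fun i _ => sq_nonneg _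
  have h1 : A m ^ 2 ≤ A 0 ^ 2 + ∑ i ∈ Icc 1 m, E i * A i + ∑ i ∈ range (m + 1), D i := by
    have := h m; linarith
  have h2 : ∑ i ∈ Icc 1 m, E i * A i ≤ (∑ i ∈ Icc 1 n, E i) * A m := by
    rw [Finset.sum_mul]
    calc ∑ i ∈ Icc 1 m, E i * A i ≤ ∑ i ∈ Icc 1 m, E i * A m := by
          apply Finset.sum_le_sum
          intro i hi
          simp only [Finset.mem_Icc] at hi
          exact mul_le_mul_of_nonneg_left
            (hmax i (Finset.mem_range.mpr (Nat.lt_succ_of_le (hi.2.trans hmn)))) (hE i)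
      _ ≤ ∑ i ∈ Icc 1 n, E i * A m :=
          Finset.sum_le_sum_of_subset_of_nonneg (Finset.Icc_subset_Icc_right hmn)
            (fun i _ _ => mul_nonneg (hE i) (hA m))
  have h3 : ∑ i ∈ range (m + 1), D i ≤ ∑ i ∈ range (n + 1), D i :=
    Finset.sum_le_sum_of_subset_of_nonneg
      (Finset.range_subset_range.mpr (Nat.succ_le_succ hmn)) (fun i _ _ => hD i)
  have hkey : A m ≤ A 0 + ∑ i ∈ Icc 1 n, E i + Real.sqrt (∑ i ∈ range (n + 1), D i) := by
    apply key_quad _ _ _ _ (hA m) (hA 0)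
      (Finset.sum_nonneg fun i _ => hE i)
      (Finset.sum_nonneg fun i _ => hD i)
    nlinarith
  exact (hmax n (self_mem_range_succ n)).trans hkey
end

section
/- Let (A_i), (B_i), (E_i), (D_i) be sequences of nonnegative real numbers such that for all n ≥ 0, A_n^2 + Σ_{i=0}^n B_i^2 ≤ A_0^2 + Σ_{i=1}^n E_i·A_i + Σ_{i=0}^n D_i. Then there is a constant C > 0 independent of n such that for every n ≥ 0, (Σ_{i=0}^n B_i^2)^{1/2} ≤ C·(A_0 + Σ_{i=1}^n E_i + (Σ_{i=0}^n D_i)^{1/2}). -/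
open Finset in
theorem gronwall_free_discrete_B (A B E D : ℕ → ℝ)
    (hA : ∀ i, 0 ≤ A i) (hB : ∀ i, 0 ≤ B i) (hE : ∀ i, 0 ≤ E i) (hD : ∀ i, 0 ≤ D i)
    (h : ∀ n, A n ^ 2 + ∑ i ∈ range (n + 1), B i ^ 2 ≤
      A 0 ^ 2 + ∑ i ∈ Icc 1 n, E i * A i + ∑ i ∈ range (n + 1), D i) :
    ∃ C > (0 : ℝ), ∀ n, Real.sqrt (∑ i ∈ range (n + 1), B i ^ 2) ≤
      C * (A 0 + ∑ i ∈ Icc 1 n, E i + Real.sqrt (∑ i ∈ range (n + 1), D i)) := by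
  refine ⟨1, one_pos, fun n => ?_⟩
  set T := ∑ i ∈ Icc 1 n, E i with hT
  set Dn := ∑ i ∈ range (n + 1), D i with hDn
  have hT0 : 0 ≤ T := Finset.sum_nonneg fun i _ => hE i
  have hDn0 : 0 ≤ Dn := Finset.sum_nonneg fun i _ => hD i
  set s := Real.sqrt Dn with hs
  have hs0 : 0 ≤ s := Real.sqrt_nonneg _
  have hs2 : s ^ 2 = Dn := Real.sq_sqrt hDn0
  have hne : (range (n+1)).Nonempty := ⟨0, by simp⟩
  obtain ⟨m, hm, hM⟩ := Finset.exists_mem_eq_sup' hne A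
  set M := (range (n+1)).sup' hne A with hMdef
  have hMn : m ≤ n := Nat.lt_succ_iff.mp (Finset.mem_range.mp hm)
  have hMA : M = A m := hM
  have hM0 : 0 ≤ M := hMA ▸ hA m
  have hAleM : ∀ i, i ≤ n → A i ≤ M := fun i hi =>
    Finset.le_sup' A (Finset.mem_range.mpr (Nat.lt_succ_of_le hi))
  have hEA : ∀ k, k ≤ n → ∑ i ∈ Icc 1 k, E i * A i ≤ M * T := by
    intro k hk
    calc ∑ i ∈ Icc 1 k, E i * A i ≤ ∑ i ∈ Icc 1 k, E i * M := by
          refine Finset.sum_le_sum fun i hi => ?_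
          exact mul_le_mul_of_nonneg_left
            (hAleM i (le_trans (Finset.mem_Icc.mp hi).2 hk)) (hE i)
      _ ≤ ∑ i ∈ Icc 1 n, E i * M := by
          refine Finset.sum_le_sum_of_subset_of_nonneg
            (Finset.Icc_subset_Icc_right hk) fun i _ _ => mul_nonneg (hE i) hM0
      _ = M * T := by rw [hT, ← Finset.sum_mul, mul_comm]
  have hDsub : ∀ k, k ≤ n → ∑ i ∈ range (k+1), D i ≤ Dn := by
    intro k hk
    exact Finset.sum_le_sum_of_subset_of_nonneg
      (Finset.range_subset_range.mpr (Nat.succ_le_succ hk)) fun i _ _ => hD i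
  have hq : M ^ 2 ≤ A 0 ^ 2 + M * T + Dn := by
    have h1 := h m
    have h2 := hEA m hMn
    have h3 := hDsub m hMn
    have h4 : 0 ≤ ∑ i ∈ range (m+1), B i ^ 2 :=
      Finset.sum_nonneg fun i _ => sq_nonneg _
    rw [hMA]
    nlinarith [h1, h2, h3, h4]
  have hMle : M ≤ A 0 + T + s := by
    nlinarith [hq, hs2, hs0, hT0, hA 0, hM0, mul_nonneg hs0 hT0,
      mul_nonneg (hA 0) hT0, mul_nonneg (hA 0) hs0]
  set Sn := A 0 + T + s with hSn
  have hSn0 : 0 ≤ Sn := by rw [hSn]; linarith [hA 0, hT0, hs0]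
  have hBle : ∑ i ∈ range (n+1), B i ^ 2 ≤ Sn ^ 2 := by
    have h1 := h n
    have h2 := hEA n le_rfl
    have hA0Sn : A 0 ≤ Sn := by rw [hSn]; linarith [hT0, hs0]
    have hsSn : s ≤ Sn := by rw [hSn]; linarith [hT0, hA 0]
    nlinarith [sq_nonneg (A n), hA 0, hs0, hT0, hM0, hMle]
  calc Real.sqrt (∑ i ∈ range (n+1), B i ^ 2) ≤ Real.sqrt (Sn ^ 2) :=
        Real.sqrt_le_sqrt hBle
    _ = Sn := by rw [Real.sqrt_sq hSn0]
    _ = 1 * (A 0 + T + s) := by rw [one_mul]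
end

section
/- Let X, Y : [0, T] → ℝ be continuous with X ≥ 0 and Y ≥ 0, let F, G : [0, T] → ℝ be nonnegative and nondecreasing, and suppose for all t ∈ [0, T]: X(t)² + ∫_0^t Y(s)² ds ≤ X(0)² + F(t)·max_{0≤s≤t} X(s) + G(t). Then for all t ∈ [0, T]: X(t) ≤ X(0) + F(t) + G(t)^{1/2}. -/
/-!
Let `u` be a point where `X` attains its maximum over `[0, t]`. At time `u` the running maximum
is `X u` itself, so dropping the nonnegative integral and using monotonicity of `F` and `G` gives
the quadratic inequality `X u ² ≤ X 0 ² + F t · X u + G t`, which forces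
`X u ≤ X 0 + F t + √(G t)`; and `X t ≤ X u`.
-/

open Set

theorem le_add_add_sqrt_of_sq_le {x a f g : ℝ} (ha : 0 ≤ a) (hf : 0 ≤ f) (hg : 0 ≤ g)
    (h : x ^ 2 ≤ a ^ 2 + f * x + g) : x ≤ a + f + √g := by
  by_contra! hlt
  have hsq : √g ^ 2 = g := Real.sq_sqrt hg
  nlinarith [Real.sqrt_nonneg g, mul_nonneg ha (Real.sqrt_nonneg g)]

theorem ContinuousOn.exists_le_sSup_image_Icc_eq {α β : Type*} [LinearOrder α]
    [TopologicalSpace α] [CompactIccSpace α] [ConditionallyCompleteLinearOrder β]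
    [TopologicalSpace β] [OrderClosedTopology β] {X : α → β} {a t : α}
    (hX : ContinuousOn X (Icc a t)) (hat : a ≤ t) :
    ∃ u ∈ Icc a t, X t ≤ X u ∧ sSup (X '' Icc a u) = X u := by
  obtain ⟨u, hu, hmax⟩ := isCompact_Icc.exists_isMaxOn (nonempty_Icc.2 hat) hX
  have hsub : Icc a u ⊆ Icc a t := Icc_subset_Icc_right hu.2
  refine ⟨u, hu, hmax (right_mem_Icc.2 hat), ?_⟩
  exact IsGreatest.csSup_eq ⟨mem_image_of_mem X (right_mem_Icc.2 hu.1),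
    forall_mem_image.2 fun s hs => hmax (hsub hs)⟩

theorem continuous_max_argument_general (T : ℝ) (X Y F G : ℝ → ℝ)
    (hXc : ContinuousOn X (Set.Icc 0 T))
    (hX : ∀ t ∈ Set.Icc (0 : ℝ) T, 0 ≤ X t)
    (hF : ∀ t ∈ Set.Icc (0 : ℝ) T, 0 ≤ F t) (hG : ∀ t ∈ Set.Icc (0 : ℝ) T, 0 ≤ G t)
    (hFmono : ∀ s ∈ Set.Icc (0 : ℝ) T, ∀ t ∈ Set.Icc (0 : ℝ) T, s ≤ t → F s ≤ F t)
    (hGmono : ∀ s ∈ Set.Icc (0 : ℝ) T, ∀ t ∈ Set.Icc (0 : ℝ) T, s ≤ t → G s ≤ G t)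
    (h : ∀ t ∈ Set.Icc (0 : ℝ) T,
      X t ^ 2 + ∫ s in (0 : ℝ)..t, Y s ^ 2 ≤
        X 0 ^ 2 + F t * sSup (X '' Set.Icc 0 t) + G t) :
    ∀ t ∈ Set.Icc (0 : ℝ) T, X t ≤ X 0 + F t + Real.sqrt (G t) := by
  intro t ht
  obtain ⟨u, ⟨hu0, hut⟩, hXtu, hsup⟩ :=
    (hXc.mono (Icc_subset_Icc_right ht.2)).exists_le_sSup_image_Icc_eq ht.1
  have huT : u ∈ Icc 0 T := ⟨hu0, hut.trans ht.2⟩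
  have hint : 0 ≤ ∫ s in (0 : ℝ)..u, Y s ^ 2 :=
    intervalIntegral.integral_nonneg hu0 fun s _ => sq_nonneg (Y s)
  have hquad : X u ^ 2 ≤ X 0 ^ 2 + F t * X u + G t := by
    have hu := h u huT
    rw [hsup] at hu
    nlinarith [mul_le_mul_of_nonneg_right (hFmono u huT t ht hut) (hX u huT),
      hGmono u huT t ht hut]
  calc X t ≤ X u := hXtu
    _ ≤ X 0 + F t + √(G t) :=
      le_add_add_sqrt_of_sq_le (hX 0 ⟨le_rfl, ht.1.trans ht.2⟩) (hF t ht) (hG t ht) hquad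

theorem continuous_max_argument (T : ℝ) (hT : 0 < T) (X Y F G : ℝ → ℝ)
    (hXc : ContinuousOn X (Set.Icc 0 T)) (hYc : ContinuousOn Y (Set.Icc 0 T))
    (hX : ∀ t ∈ Set.Icc (0 : ℝ) T, 0 ≤ X t) (hY : ∀ t ∈ Set.Icc (0 : ℝ) T, 0 ≤ Y t)
    (hF : ∀ t ∈ Set.Icc (0 : ℝ) T, 0 ≤ F t) (hG : ∀ t ∈ Set.Icc (0 : ℝ) T, 0 ≤ G t)
    (hFmono : ∀ s ∈ Set.Icc (0 : ℝ) T, ∀ t ∈ Set.Icc (0 : ℝ) T, s ≤ t → F s ≤ F t)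
    (hGmono : ∀ s ∈ Set.Icc (0 : ℝ) T, ∀ t ∈ Set.Icc (0 : ℝ) T, s ≤ t → G s ≤ G t)
    (h : ∀ t ∈ Set.Icc (0 : ℝ) T,
      X t ^ 2 + ∫ s in (0 : ℝ)..t, Y s ^ 2 ≤
        X 0 ^ 2 + F t * sSup (X '' Set.Icc 0 t) + G t) :
    ∀ t ∈ Set.Icc (0 : ℝ) T, X t ≤ X 0 + F t + Real.sqrt (G t) :=
  continuous_max_argument_general T X Y F G hXc hX hF hG hFmono hGmono h
end

section
/- Let H be a real inner product space and let a : H × H → ℝ be a symmetric bilinear form with a(v, v) ≥ C·μ·‖v‖² and |a(w, v)| ≤ C'·μ·‖w‖·‖v‖ for all v, w ∈ H, where C, C', μ > 0. Suppose e ∈ H and b : H × Q → ℝ is a bilinear map (Q a normed space) and p ∈ Q satisfy a(e, v) + b(v, p) = 0 for all v ∈ H, and the inf-sup condition C₀·‖p‖_Q ≤ sup_{0≠v∈H} b(v, p)/‖v‖ holds with C₀ > 0. Then ‖p‖_Q ≤ (C'/C₀)·μ^{1/2}·C^{-1/2}·a(e, e)^{1/2}. -/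
/-!
Testing the error equation `a(e, v) + b(v, p) = 0` against `v` gives `b(v, p) = -a(e, v) ≤ C' μ ‖e‖ ‖v‖`,
so the inf-sup condition yields `C₀ ‖p‖ ≤ C' μ ‖e‖`; coercivity turns `‖e‖` into
`(C μ)^{-1/2} a(e, e)^{1/2}`.
-/

theorem iSup_div_norm_le {E : Type*} [NormedAddCommGroup E] (f : E → ℝ) {K : ℝ} (hK : 0 ≤ K)
    (hf : ∀ v, f v ≤ K * ‖v‖) : ⨆ v : {v : E // v ≠ 0}, f v.1 / ‖v.1‖ ≤ K :=
  Real.iSup_le (fun v => (div_le_iff₀ (norm_pos_iff.mpr v.2)).mpr (hf v.1)) hK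

theorem Real.sqrt_mul_le_sqrt_of_mul_sq_le {c x y : ℝ} (hc : 0 ≤ c) (hx : 0 ≤ x)
    (h : c * x ^ 2 ≤ y) : √c * x ≤ √y := by
  simpa [Real.sqrt_mul hc, Real.sqrt_sq hx] using Real.sqrt_le_sqrt h

theorem total_pressure_error_bound_general {H Q : Type*}
    [NormedAddCommGroup H] [InnerProductSpace ℝ H] [NormedAddCommGroup Q] [NormedSpace ℝ Q]
    (a : H → H → ℝ)
    (C C' μ : ℝ) (hC : 0 < C) (hC' : 0 < C') (hμ : 0 < μ)
    (hcoer : ∀ v : H, a v v ≥ C * μ * ‖v‖ ^ 2)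
    (hcont : ∀ w v : H, |a w v| ≤ C' * μ * ‖w‖ * ‖v‖)
    (b : H →ₗ[ℝ] Q →ₗ[ℝ] ℝ) (e : H) (p : Q)
    (herr : ∀ v : H, a e v + b v p = 0)
    (C₀ : ℝ) (hC₀ : 0 < C₀)
    (hinfsup : C₀ * ‖p‖ ≤ ⨆ v : {v : H // v ≠ 0}, b v.1 p / ‖v.1‖) :
    ‖p‖ ≤ (C' / C₀) * Real.sqrt μ / Real.sqrt C * Real.sqrt (a e e) := by
  have hp : C₀ * ‖p‖ ≤ C' * μ * ‖e‖ :=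
    hinfsup.trans <| iSup_div_norm_le (fun v => b v p) (by positivity) fun v => by
      linarith [herr v, neg_abs_le (a e v), hcont e v]
  have he : √C * √μ * ‖e‖ ≤ √(a e e) := by
    rw [← Real.sqrt_mul hC.le]
    exact Real.sqrt_mul_le_sqrt_of_mul_sq_le (by positivity) (norm_nonneg e) (hcoer e)
  calc ‖p‖ ≤ C' / C₀ * (μ * ‖e‖) := by
        rw [div_mul_eq_mul_div, le_div_iff₀ hC₀]; linarith
    _ = C' / C₀ * √μ / √C * (√C * √μ * ‖e‖) := by
        field_simp; rw [Real.sq_sqrt hμ.le, mul_comm]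
    _ ≤ C' / C₀ * √μ / √C * √(a e e) := by gcongr

theorem total_pressure_error_bound {H Q : Type*}
    [NormedAddCommGroup H] [InnerProductSpace ℝ H] [NormedAddCommGroup Q] [NormedSpace ℝ Q]
    (a : H → H → ℝ) (hsymm : ∀ v w : H, a v w = a w v)
    (C C' μ : ℝ) (hC : 0 < C) (hC' : 0 < C') (hμ : 0 < μ)
    (hcoer : ∀ v : H, a v v ≥ C * μ * ‖v‖ ^ 2)
    (hcont : ∀ w v : H, |a w v| ≤ C' * μ * ‖w‖ * ‖v‖)
    (b : H →ₗ[ℝ] Q →ₗ[ℝ] ℝ) (e : H) (p : Q)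
    (herr : ∀ v : H, a e v + b v p = 0)
    (C₀ : ℝ) (hC₀ : 0 < C₀)
    (hinfsup : C₀ * ‖p‖ ≤ ⨆ v : {v : H // v ≠ 0}, b v.1 p / ‖v.1‖) :
    ‖p‖ ≤ (C' / C₀) * Real.sqrt μ / Real.sqrt C * Real.sqrt (a e e) :=
  total_pressure_error_bound_general a C C' μ hC hC' hμ hcoer hcont b e p herr C₀ hC₀ hinfsup
end
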